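/- Let α, β ∈ F with α² + β² = 1 and set z := α + iβ. If z² ≠ 1, z³ ≠ 1 and z⁴ ≠ 1 (equivalently, the five scalars 1, z, z⁻¹, z², z⁻² are pairwise distinct), then the centralizer of p_{α,β} in SO(3,F) is exactly the subgroup P, i.e. {g ∈ SO(3,F) : g·p_{α,β} = p_{α,β}·g} = P. -/

import Mathlib

noncomputable section

open Matrix

variable (F : Type*) [Field F] [IsAlgClosed F] [CharZero F]

/-- `SO(3,F)` as a set of 3×3 matrices: `x xᵀ = 1` and `det x = 1`. -/
def SO3 : Set (Matrix (Fin 3) (Fin 3) F) := {g | g * gᵀ = 1 ∧ g.det = 1}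

/-- The matrix `p_{α,β}` with rows `(1,0,0)`, `(0,α,β)`, `(0,−β,α)`. -/
def pab (a b : F) : Matrix (Fin 3) (Fin 3) F := !![1, 0, 0; 0, a, b; 0, -b, a]

/-- The maximal torus `P = {p_{α,β} : α² + β² = 1}` of `SO(3,F)`. -/
def Pgrp : Set (Matrix (Fin 3) (Fin 3) F) :=
  {m | ∃ a b : F, a ^ 2 + b ^ 2 = 1 ∧ m = pab F a b}

/-- The matrix `s` with rows `(−1,0,0)`, `(0,0,1)`, `(0,1,0)`. -/
def sMat : Matrix (Fin 3) (Fin 3) F := !![-1, 0, 0; 0, 0, 1; 0, 1, 0]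

/-!
Write `p_{α,β} = 1 ⊕ R` with `R` the plane rotation; `z² ≠ 1` forces `β ≠ 0`, hence `α ≠ 1`.
If `g` commutes with `p_{α,β}`, the rest of the first column of `g` is fixed by `R` and the rest
of the first row by `Rᵀ`; both vanish because `det (R - 1) = 2 (1 - α) ≠ 0`. The lower `2 × 2`
block of `g` commutes with `R`, and `β ≠ 0` forces it to have the shape `[[γ, δ], [-δ, γ]]`.
Orthogonality then gives `γ² + δ² = 1` and `det g = 1` gives `g₀₀ = 1`, so `g = p_{γ,δ}`.
-/

section

variable {K : Type*} [Field K]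

theorem ne_zero_of_add_mul_sq_ne_one {a b i : K} (hab : a ^ 2 + b ^ 2 = 1)
    (hz : (a + i * b) ^ 2 ≠ 1) : b ≠ 0 := by
  rintro rfl
  exact hz (by linear_combination hab)

theorem one_sub_sq_add_sq_ne_zero [NeZero (2 : K)] {a b : K} (hab : a ^ 2 + b ^ 2 = 1)
    (hb : b ≠ 0) : (1 - a) ^ 2 + b ^ 2 ≠ 0 := by
  have ha : a ≠ 1 := by
    rintro rfl
    exact hb (pow_eq_zero_iff two_ne_zero |>.1 (by linear_combination hab))
  rw [show (1 - a) ^ 2 + b ^ 2 = 2 * (1 - a) by linear_combination hab]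
  exact mul_ne_zero two_ne_zero (sub_ne_zero.2 ha.symm)

theorem eq_zero_of_rotation_fixes {a b x y : K} (hdet : (1 - a) ^ 2 + b ^ 2 ≠ 0)
    (hx : a * x + b * y = x) (hy : -b * x + a * y = y) : x = 0 ∧ y = 0 :=
  ⟨(mul_eq_zero.1 (by linear_combination -(1 - a) * hx - b * hy)).resolve_left hdet,
    (mul_eq_zero.1 (by linear_combination b * hx - (1 - a) * hy)).resolve_left hdet⟩

theorem pab_mul_pab (a b c d : K) :
    pab K a b * pab K c d = pab K (a * c - b * d) (a * d + b * c) := by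
  ext i j
  fin_cases i <;> fin_cases j <;> simp [pab, mul_apply, Fin.sum_univ_three] <;> ring

theorem pab_commute (a b c d : K) : Commute (pab K a b) (pab K c d) := by
  rw [Commute, SemiconjBy, pab_mul_pab, pab_mul_pab]
  congr 1 <;> ring

theorem exists_eq_of_commute_pab [NeZero (2 : K)] {a b : K} (hab : a ^ 2 + b ^ 2 = 1)
    (hb : b ≠ 0) {g : Matrix (Fin 3) (Fin 3) K} (hg : Commute g (pab K a b)) :
    ∃ e c d, g = !![e, 0, 0; 0, c, d; 0, -d, c] := by
  have hentries := hg.eq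
  rw [eta_fin_three g, pab, mul_fin_three, mul_fin_three] at hentries
  simp only [mul_one, mul_zero, add_zero, zero_add, mul_neg, one_mul, zero_mul, neg_mul,
    EmbeddingLike.apply_eq_iff_eq, vecCons_inj, and_true, true_and] at hentries
  obtain ⟨⟨h01, h02⟩, ⟨h10, h11, h12⟩, h20, -, -⟩ := hentries
  have hdet := one_sub_sq_add_sq_ne_zero hab hb
  obtain ⟨g10, g20⟩ := eq_zero_of_rotation_fixes (x := g 1 0) (y := g 2 0) hdet
    (by linear_combination -h10) (by linear_combination -h20)
  obtain ⟨g01, g02⟩ := eq_zero_of_rotation_fixes (b := -b) (x := g 0 1) (y := g 0 2)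
    (by rwa [neg_sq]) (by linear_combination h01) (by linear_combination h02)
  have g21 : g 2 1 = -g 1 2 := mul_left_cancel₀ hb (by linear_combination -h11)
  have g22 : g 2 2 = g 1 1 := mul_left_cancel₀ hb (by linear_combination -h12)
  refine ⟨g 0 0, g 1 1, g 1 2, ?_⟩
  conv_lhs => rw [eta_fin_three g]
  rw [g01, g02, g10, g20, g21, g22]

theorem block_mem_SO3_iff {e c d : K} :
    !![e, 0, 0; 0, c, d; 0, -d, c] ∈ SO3 K ↔ e = 1 ∧ c ^ 2 + d ^ 2 = 1 := by
  have hmul : !![e, 0, 0; 0, c, d; 0, -d, c] * !![e, 0, 0; 0, c, d; 0, -d, c]ᵀ =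
      !![e ^ 2, 0, 0; 0, c ^ 2 + d ^ 2, 0; 0, 0, c ^ 2 + d ^ 2] := by
    ext i j
    fin_cases i <;> fin_cases j <;> simp [mul_apply, Fin.sum_univ_three] <;> ring
  have hdet : (!![e, 0, 0; 0, c, d; 0, -d, c]).det = e * (c ^ 2 + d ^ 2) := by
    simp only [det_fin_three, of_apply, cons_val', cons_val_zero, cons_val_one, cons_val,
      cons_val_fin_one]
    ring
  simp only [SO3, Set.mem_ofPred_eq, hmul, hdet, one_fin_three, EmbeddingLike.apply_eq_iff_eq,
    vecCons_inj]
  constructor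
  · rintro ⟨⟨-, ⟨-, hcd, -⟩, -⟩, he⟩
    rw [hcd, mul_one] at he
    exact ⟨he, hcd⟩
  · rintro ⟨rfl, hcd⟩
    simp [hcd]

end

theorem centralizer_pab_eq_P (I : F)
    (a b : F) (hab : a ^ 2 + b ^ 2 = 1)
    (hz2 : (a + I * b) ^ 2 ≠ 1) :
    {g : Matrix (Fin 3) (Fin 3) F | g ∈ SO3 F ∧ g * pab F a b = pab F a b * g} = Pgrp F := by
  have hb : b ≠ 0 := ne_zero_of_add_mul_sq_ne_one hab hz2
  ext g
  constructor
  · rintro ⟨hg, hcomm⟩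
    obtain ⟨e, c, d, rfl⟩ := exists_eq_of_commute_pab hab hb hcomm
    obtain ⟨rfl, hcd⟩ := block_mem_SO3_iff.1 hg
    exact ⟨c, d, hcd, rfl⟩
  · rintro ⟨c, d, hcd, rfl⟩
    exact ⟨block_mem_SO3_iff.2 ⟨rfl, hcd⟩, (pab_commute c d a b).eq⟩

end
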